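/- Let (X,a) and (Y,b) be 𝒯-categories and f: X → Y a function. The following are equivalent: (i) f is a 𝒯-functor; (ii) f_* := b·Tf is a 𝒯-module (X,a) ⇸∘ (Y,b); (iii) f^* := f°·b is a 𝒯-module (Y,b) ⇸∘ (X,a); (iv) a ≤ f^* ∘ f_*. -/

import Mathlib

universe u

namespace Paper

/-- A strict topological theory `𝒯 = (𝕋, V, ξ)`: a commutative unital quantale `V`
(a complete lattice with a commutative monoid structure whose multiplication preserves
suprema in each variable, with `⊥ < k`), a `Set`-monad `𝕋 = (T, e, m)` such that `T`
sends pullbacks to weak pullbacks and the naturality squares of `m` are weak pullbacks,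
and a `𝕋`-algebra structure `ξ : T V → V` for which `⊗` and `k` are `𝕋`-algebra
homomorphisms and `ξ_X := ξ ∘ T(-)` is a (monotone) natural transformation
`P_V → P_V T`. -/
structure TopTheory (V : Type u) [CompleteLattice V] (T : Type u → Type u) where
  tens : V → V → V
  unit : V
  tens_comm : ∀ u v : V, tens u v = tens v u
  tens_assoc : ∀ u v w : V, tens (tens u v) w = tens u (tens v w)
  unit_tens : ∀ v : V, tens unit v = v
  tens_sSup : ∀ (u : V) (S : Set V), tens u (sSup S) = ⨆ v ∈ S, tens u v
  bot_lt_unit : (⊥ : V) < unit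
  map : ∀ {X Y : Type u}, (X → Y) → T X → T Y
  map_id : ∀ {X : Type u}, map (id : X → X) = id
  map_comp : ∀ {X Y Z : Type u} (g : Y → Z) (f : X → Y) (𝔵 : T X),
    map (g ∘ f) 𝔵 = map g (map f 𝔵)
  e : ∀ {X : Type u}, X → T X
  m : ∀ {X : Type u}, T (T X) → T X
  e_nat : ∀ {X Y : Type u} (f : X → Y) (x : X), map f (e x) = e (f x)
  m_nat : ∀ {X Y : Type u} (f : X → Y) (𝔛 : T (T X)), map f (m 𝔛) = m (map (map f) 𝔛)
  m_e : ∀ {X : Type u} (𝔵 : T X), m (e 𝔵) = 𝔵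
  m_map_e : ∀ {X : Type u} (𝔵 : T X), m (map e 𝔵) = 𝔵
  m_assoc : ∀ {X : Type u} (𝔜 : T (T (T X))), m (m 𝔜) = m (map m 𝔜)
  /-- (BC): `T` sends pullbacks to weak pullbacks. -/
  map_bc : ∀ {X Y Z : Type u} (f : X → Z) (g : Y → Z) (𝔵 : T X) (𝔶 : T Y),
    map f 𝔵 = map g 𝔶 →
    ∃ 𝔴 : T {p : X × Y // f p.1 = g p.2},
      map (fun p => p.1.1) 𝔴 = 𝔵 ∧ map (fun p => p.1.2) 𝔴 = 𝔶
  /-- (BC): every naturality square of `m` is a weak pullback. -/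
  m_bc : ∀ {X Y : Type u} (f : X → Y) (𝔜 : T (T Y)) (𝔵 : T X),
    m 𝔜 = map f 𝔵 → ∃ 𝔛 : T (T X), map (map f) 𝔛 = 𝔜 ∧ m 𝔛 = 𝔵
  xi : T V → V
  xi_e : ∀ v : V, xi (e v) = v
  xi_m : ∀ 𝔙 : T (T V), xi (m 𝔙) = xi (map xi 𝔙)
  /-- `k : 1 → V` is a `𝕋`-algebra homomorphism. -/
  xi_unit : ∀ {X : Type u} (𝔵 : T X), xi (map (fun _ => unit) 𝔵) = unit
  /-- `⊗ : V × V → V` is a `𝕋`-algebra homomorphism. -/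
  xi_tens : ∀ 𝔴 : T (V × V),
    xi (map (fun p => tens p.1 p.2) 𝔴) = tens (xi (map Prod.fst 𝔴)) (xi (map Prod.snd 𝔴))
  /-- each component `ξ_X : V^X → V^{T X}` is monotone. -/
  xi_mono : ∀ {X : Type u} (φ φ' : X → V), (∀ x, φ x ≤ φ' x) →
    ∀ 𝔵 : T X, xi (map φ 𝔵) ≤ xi (map φ' 𝔵)
  /-- `ξ_X` is a natural transformation `P_V → P_V T`. -/
  xi_nat : ∀ {X Y : Type u} (f : X → Y) (φ : X → V) (𝔶 : T Y),
    (⨆ 𝔵 : {𝔵 : T X // map f 𝔵 = 𝔶}, xi (map φ 𝔵.1)) =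
      xi (map (fun y => ⨆ x : {x : X // f x = y}, φ x.1) 𝔶)

namespace TopTheory

variable {V : Type u} [CompleteLattice V] {T : Type u → Type u}

/-- The internal hom of the quantale: `u ⊗ (-) ⊣ hom (u, -)`. -/
def ihom (𝒯 : TopTheory V T) (u w : V) : V := sSup {z | 𝒯.tens u z ≤ w}

/-- The extension `T_ξ` of `T : Set → Set` to `V`-relations. -/
def Txi (𝒯 : TopTheory V T) {X Y : Type u} (r : X → Y → V) (𝔵 : T X) (𝔶 : T Y) : V :=
  ⨆ 𝔴 : {w : T (X × Y) // 𝒯.map Prod.fst w = 𝔵 ∧ 𝒯.map Prod.snd w = 𝔶},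
    𝒯.xi (𝒯.map (fun p => r p.1 p.2) 𝔴.1)

/-- Kleisli convolution `β ∘ α = β · T_ξ α · m_X°` of `𝒯`-relations
`α : X ⇸ Y` and `β : Y ⇸ Z`. -/
def kleisli (𝒯 : TopTheory V T) {X Y Z : Type u}
    (β : T Y → Z → V) (α : T X → Y → V) (𝔵 : T X) (z : Z) : V :=
  ⨆ 𝔛 : {𝔛 : T (T X) // 𝒯.m 𝔛 = 𝔵}, ⨆ 𝔶 : T Y, 𝒯.tens (𝒯.Txi α 𝔛.1 𝔶) (β 𝔶 z)

/-- The `𝒯`-relation `e_X° : X ⇸ X`. -/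
def unitRel (𝒯 : TopTheory V T) (X : Type u) (𝔵 : T X) (x : X) : V :=
  ⨆ _ : 𝔵 = 𝒯.e x, 𝒯.unit

/-- A `𝒯`-category structure on `X`: a `𝒯`-relation `a : X ⇸ X` with
`e_X° ≤ a` and `a ∘ a ≤ a`. -/
structure TCatStr (𝒯 : TopTheory V T) (X : Type u) where
  rel : T X → X → V
  le_refl : ∀ x : X, 𝒯.unit ≤ rel (𝒯.e x) x
  comp : ∀ (𝔵 : T X) (x : X), 𝒯.kleisli rel rel 𝔵 x ≤ rel 𝔵 x

/-- The `𝒯`-module conditions `φ ∘ a ≤ φ` and `b ∘ φ ≤ φ` for a `𝒯`-relation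
`φ : X ⇸ Y` between (structures underlying) `𝒯`-categories `(X,a)` and `(Y,b)`. -/
def IsTModRel (𝒯 : TopTheory V T) {X Y : Type u}
    (a : T X → X → V) (b : T Y → Y → V) (φ : T X → Y → V) : Prop :=
  (∀ 𝔵 y, 𝒯.kleisli φ a 𝔵 y ≤ φ 𝔵 y) ∧ (∀ 𝔵 y, 𝒯.kleisli b φ 𝔵 y ≤ φ 𝔵 y)

variable {𝒯 : TopTheory V T}

/-- `f_* = b · T f`. -/
def modStar {X Y : Type u} (b : 𝒯.TCatStr Y) (f : X → Y) (𝔵 : T X) (y : Y) : V :=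
  b.rel (𝒯.map f 𝔵) y

/-- `f^* = f° · b`. -/
def modCostar {X Y : Type u} (b : 𝒯.TCatStr Y) (f : X → Y) (𝔶 : T Y) (x : X) : V :=
  b.rel 𝔶 (f x)

/-- The extension `φ ⟜ ψ` of `φ : X ⇸∘ Y` along `ψ : X ⇸∘ Z`, given by
`(φ ⟜ ψ)(𝔷,y) = ⋀_{𝔵 ∈ T X} hom((T_ξ ψ · m_X°)(𝔵,𝔷), φ(𝔵,y))`. -/
def extend (𝒯 : TopTheory V T) {X Y Z : Type u}
    (φ : T X → Y → V) (ψ : T X → Z → V) (𝔷 : T Z) (y : Y) : V :=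
  ⨅ 𝔵 : T X, 𝒯.ihom (⨆ 𝔛 : {𝔛 : T (T X) // 𝒯.m 𝔛 = 𝔵}, 𝒯.Txi ψ 𝔛.1 𝔷) (φ 𝔵 y)

/-- A `𝒯`-functor `f : (X,a) → (Y,b)`. -/
def IsTFunctor {X Y : Type u} (a : 𝒯.TCatStr X) (b : 𝒯.TCatStr Y) (f : X → Y) : Prop :=
  ∀ (𝔵 : T X) (x : X), a.rel 𝔵 x ≤ b.rel (𝒯.map f 𝔵) (f x)

/-- A fully faithful `𝒯`-functor. -/
def FullyFaithful {X Y : Type u} (a : 𝒯.TCatStr X) (b : 𝒯.TCatStr Y) (f : X → Y) : Prop :=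
  ∀ (𝔵 : T X) (x : X), a.rel 𝔵 x = b.rel (𝒯.map f 𝔵) (f x)

/-- The order `f ≤ g ⟺ f^* ≤ g^*` on `𝒯`-functors `X → (Y,b)`. -/
def funLE {X Y : Type u} (b : 𝒯.TCatStr Y) (f g : X → Y) : Prop :=
  ∀ (𝔶 : T Y) (x : X), b.rel 𝔶 (f x) ≤ b.rel 𝔶 (g x)

/-- Equivalence `f ≅ g ⟺ f^* = g^*` of `𝒯`-functors `X → (Y,b)`. -/
def FunEquiv {X Y : Type u} (b : 𝒯.TCatStr Y) (f g : X → Y) : Prop :=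
  ∀ (𝔶 : T Y) (x : X), b.rel 𝔶 (f x) = b.rel 𝔶 (g x)

/-- `f ⊣ g`:  `1_X ≤ g·f` and `f·g ≤ 1_Y`. -/
def IsAdjunction {X Y : Type u} (a : 𝒯.TCatStr X) (b : 𝒯.TCatStr Y)
    (f : X → Y) (g : Y → X) : Prop :=
  (∀ (𝔵 : T X) (x : X), a.rel 𝔵 x ≤ a.rel 𝔵 (g (f x))) ∧
    (∀ (𝔶 : T Y) (y : Y), b.rel 𝔶 (f (g y)) ≤ b.rel 𝔶 y)

/-- A left adjoint `𝒯`-functor. -/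
def IsLeftAdjoint {X Y : Type u} (a : 𝒯.TCatStr X) (b : 𝒯.TCatStr Y) (f : X → Y) : Prop :=
  IsTFunctor a b f ∧ ∃ g : Y → X, IsTFunctor b a g ∧ IsAdjunction a b f g

/-- L-separatedness: equivalent `𝒯`-functors into `X` are equal. -/
def Separated {X : Type u} (a : 𝒯.TCatStr X) : Prop :=
  ∀ (A : Type u) (as : 𝒯.TCatStr A) (f g : A → X),
    IsTFunctor as a f → IsTFunctor as a g → FunEquiv a f g → f = g

/-- Injectivity with respect to fully faithful `𝒯`-functors. -/
def Injective {X : Type u} (a : 𝒯.TCatStr X) : Prop :=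
  ∀ (A B : Type u) (as : 𝒯.TCatStr A) (bs : 𝒯.TCatStr B) (f : A → X) (i : A → B),
    IsTFunctor as a f → IsTFunctor as bs i → FullyFaithful as bs i →
      ∃ g : B → X, IsTFunctor bs a g ∧ FunEquiv a (g ∘ i) f

/-- `g : Z → X` is the `ψ`-weighted colimit of `h : A → X`, i.e. `g_* = h_* ⟜ ψ`. -/
def IsColimit {X A Z : Type u} (a : 𝒯.TCatStr X) (h : A → X) (ψ : T A → Z → V)
    (g : Z → X) : Prop :=
  ∀ (𝔷 : T Z) (x : X), modStar a g 𝔷 x = 𝒯.extend (modStar a h) ψ 𝔷 x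

/-- Cocompleteness: every weighted diagram has a colimit. -/
def Cocomplete {X : Type u} (a : 𝒯.TCatStr X) : Prop :=
  ∀ (A Z : Type u) (as : 𝒯.TCatStr A) (cs : 𝒯.TCatStr Z) (h : A → X),
    IsTFunctor as a h → ∀ ψ : T A → Z → V, 𝒯.IsTModRel as.rel cs.rel ψ →
      ∃ g : Z → X, IsTFunctor cs a g ∧ IsColimit a h ψ g

/-- Cocontinuity: preservation of all weighted colimits. -/
def Cocontinuous {X Y : Type u} (a : 𝒯.TCatStr X) (b : 𝒯.TCatStr Y) (f : X → Y) : Prop :=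
  ∀ (A Z : Type u) (as : 𝒯.TCatStr A) (cs : 𝒯.TCatStr Z) (h : A → X)
    (ψ : T A → Z → V) (g : Z → X),
    IsTFunctor as a h → 𝒯.IsTModRel as.rel cs.rel ψ → IsTFunctor cs a g →
      IsColimit a h ψ g → IsColimit b (f ∘ h) ψ (f ∘ g)

/-- A presheaf on `(X,a)`: a `𝒯`-module `X ⇸∘ G`, where `G = (1, e_1°)`. -/
def IsPresheaf {X : Type u} (a : 𝒯.TCatStr X) (ψ : T X → V) : Prop :=
  𝒯.IsTModRel a.rel (𝒯.unitRel PUnit) (fun 𝔵 _ => ψ 𝔵)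

/-- The underlying set of the presheaf `𝒯`-category `X̂`. -/
def Hat {X : Type u} (a : 𝒯.TCatStr X) : Type u := {ψ : T X → V // IsPresheaf a ψ}

/-- The `𝒯`-category structure `⟦-,-⟧` of `V^{|X|}`. -/
def powRel (𝒯 : TopTheory V T) (X : Type u) (𝔭 : T (T X → V)) (ψ : T X → V) : V :=
  ⨅ 𝔮 : {q : T ((T X) × (T X → V)) // 𝒯.map Prod.snd q = 𝔭},
    𝒯.ihom (𝒯.xi (𝒯.map (fun p => p.2 p.1) 𝔮.1)) (ψ (𝒯.m (𝒯.map Prod.fst 𝔮.1)))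

/-- `hs` is the `𝒯`-category structure on `X̂` inherited from `V^{|X|}`. -/
def IsHatStr {X : Type u} (a : 𝒯.TCatStr X) (hs : 𝒯.TCatStr (Hat a)) : Prop :=
  ∀ (𝔭 : T (Hat a)) (ψ : Hat a), hs.rel 𝔭 ψ = 𝒯.powRel X (𝒯.map Subtype.val 𝔭) ψ.1

/-- `y` is the Yoneda functor `X → X̂`, `y x = a(-,x)`. -/
def IsYoneda {X : Type u} (a : 𝒯.TCatStr X) (y : X → Hat a) : Prop :=
  ∀ (x : X) (𝔵 : T X), (y x).1 𝔵 = a.rel 𝔵 x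

/-- The underlying map `ψ ↦ ψ ∘ f^*` of `f̂ : X̂ → Ŷ`. -/
def hatMapRel {X Y : Type u} (b : 𝒯.TCatStr Y) (f : X → Y) (ψ : T X → V) (𝔶 : T Y) : V :=
  𝒯.kleisli (fun 𝔵 (_ : PUnit.{u + 1}) => ψ 𝔵) (modCostar b f) 𝔶 PUnit.unit

/-- `fh` is the `𝒯`-functor `f̂ : X̂ → Ŷ`, with underlying map `ψ ↦ ψ ∘ f^*`. -/
def IsHatMap {X Y : Type u} (a : 𝒯.TCatStr X) (b : 𝒯.TCatStr Y) (f : X → Y)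
    (fh : Hat a → Hat b) : Prop :=
  ∀ (ψ : Hat a) (𝔶 : T Y), (fh ψ).1 𝔶 = hatMapRel b f ψ.1 𝔶

/-- An inhabited `𝒯`-module: `k ≤ ⋀_y ⋁_𝔵 φ(𝔵,y)`. -/
def InhabitedMod (𝒯 : TopTheory V T) {X Y : Type u} (φ : T X → Y → V) : Prop :=
  𝒯.unit ≤ ⨅ y : Y, ⨆ 𝔵 : T X, φ 𝔵 y

/-- A dense `𝒯`-functor: `f_*` is inhabited. -/
def Dense {X Y : Type u} (b : 𝒯.TCatStr Y) (f : X → Y) : Prop :=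
  𝒯.InhabitedMod (modStar b f)

/-- The underlying set of `X⁺ = {ψ ∈ X̂ ∣ ψ inhabited}`. -/
def Plus {X : Type u} (a : 𝒯.TCatStr X) : Type u :=
  {ψ : Hat a // 𝒯.InhabitedMod (fun 𝔵 (_ : PUnit.{u + 1}) => ψ.1 𝔵)}

/-- `ps` is the `𝒯`-category structure on `X⁺` inherited from `X̂`. -/
def IsPlusStr {X : Type u} (a : 𝒯.TCatStr X) (hs : 𝒯.TCatStr (Hat a))
    (ps : 𝒯.TCatStr (Plus a)) : Prop :=
  ∀ (𝔭 : T (Plus a)) (ψ : Plus a), ps.rel 𝔭 ψ = hs.rel (𝒯.map Subtype.val 𝔭) ψ.1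

/-- Inhabited-cocompleteness: all colimits with inhabited weights exist. -/
def ICocomplete {X : Type u} (a : 𝒯.TCatStr X) : Prop :=
  ∀ (A Z : Type u) (as : 𝒯.TCatStr A) (cs : 𝒯.TCatStr Z) (h : A → X),
    IsTFunctor as a h → ∀ ψ : T A → Z → V, 𝒯.IsTModRel as.rel cs.rel ψ →
      𝒯.InhabitedMod ψ → ∃ g : Z → X, IsTFunctor cs a g ∧ IsColimit a h ψ g

/-- Inhabited-cocontinuity: preservation of all colimits with inhabited weights. -/
def ICocontinuous {X Y : Type u} (a : 𝒯.TCatStr X) (b : 𝒯.TCatStr Y) (f : X → Y) : Prop :=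
  ∀ (A Z : Type u) (as : 𝒯.TCatStr A) (cs : 𝒯.TCatStr Z) (h : A → X)
    (ψ : T A → Z → V) (g : Z → X),
    IsTFunctor as a h → 𝒯.IsTModRel as.rel cs.rel ψ → 𝒯.InhabitedMod ψ →
      IsTFunctor cs a g → IsColimit a h ψ g → IsColimit b (f ∘ h) ψ (f ∘ g)


/-!
Both directions of each equivalence are estimates on a Kleisli convolution. Upper bounds
come from transitivity `b ∘ b ≤ b`, transported along `f` by the monotonicity of `T_ξ`
under maps; lower bounds come from choosing the witness `𝔛` in `β ∘ α = β · T_ξ α · m°`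
to be `e 𝔵` or `T e 𝔵`, where reflexivity `e° ≤ b` and `ξ·T k = k` make the factor
`T_ξ α` at least `k`. In particular `(f^* ∘ f_*)(𝔵, x) = b(Tf 𝔵, f x)`, so (iv) is (i).
-/

theorem map_id_apply {X : Type u} (𝔵 : T X) : 𝒯.map id 𝔵 = 𝔵 := by
  rw [𝒯.map_id, id]

theorem tens_le_tens_left (z : V) {w w' : V} (h : w ≤ w') : 𝒯.tens z w ≤ 𝒯.tens z w' := by
  have hpair : 𝒯.tens z w' = ⨆ v ∈ ({w, w'} : Set V), 𝒯.tens z v := by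
    rw [← 𝒯.tens_sSup, sSup_pair, sup_eq_right.2 h]
  rw [hpair]
  exact le_iSup₂_of_le (f := fun v (_ : v ∈ ({w, w'} : Set V)) => 𝒯.tens z v) w
    (Set.mem_insert _ _) le_rfl

theorem tens_le_tens {u u' v v' : V} (hu : u ≤ u') (hv : v ≤ v') :
    𝒯.tens u v ≤ 𝒯.tens u' v' :=
  calc 𝒯.tens u v ≤ 𝒯.tens u v' := 𝒯.tens_le_tens_left u hv
    _ = 𝒯.tens v' u := 𝒯.tens_comm _ _
    _ ≤ 𝒯.tens v' u' := 𝒯.tens_le_tens_left v' hu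
    _ = 𝒯.tens u' v' := 𝒯.tens_comm _ _

theorem txi_le_txi_map {X Y X' Y' : Type u} {r : X → Y → V} {s : X' → Y' → V}
    (g : X → X') (h : Y → Y') (hrs : ∀ x y, r x y ≤ s (g x) (h y)) (𝔵 : T X) (𝔶 : T Y) :
    𝒯.Txi r 𝔵 𝔶 ≤ 𝒯.Txi s (𝒯.map g 𝔵) (𝒯.map h 𝔶) := by
  refine iSup_le fun ⟨𝔴, h₁, h₂⟩ => ?_
  refine le_trans (𝒯.xi_mono _ (fun p => s (g p.1) (h p.2)) (fun p => hrs p.1 p.2) 𝔴) ?_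
  refine le_iSup_of_le ⟨𝒯.map (Prod.map g h) 𝔴, ?_, ?_⟩ ?_
  · rw [← 𝒯.map_comp, ← h₁, ← 𝒯.map_comp]; rfl
  · rw [← 𝒯.map_comp, ← h₂, ← 𝒯.map_comp]; rfl
  · rw [← 𝒯.map_comp]; rfl

theorem le_txi_e {X Y : Type u} (r : X → Y → V) (x : X) (y : Y) :
    r x y ≤ 𝒯.Txi r (𝒯.e x) (𝒯.e y) := by
  refine le_iSup_of_le ⟨𝒯.e (x, y), 𝒯.e_nat _ _, 𝒯.e_nat _ _⟩ ?_
  rw [𝒯.e_nat, 𝒯.xi_e]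

theorem unit_le_txi_map {X Y Z : Type u} {r : Y → Z → V} (g : X → Y) (h : X → Z)
    (hr : ∀ x, 𝒯.unit ≤ r (g x) (h x)) (𝔵 : T X) :
    𝒯.unit ≤ 𝒯.Txi r (𝒯.map g 𝔵) (𝒯.map h 𝔵) := by
  refine le_iSup_of_le ⟨𝒯.map (fun x => (g x, h x)) 𝔵, ?_, ?_⟩ ?_
  · rw [← 𝒯.map_comp]; rfl
  · rw [← 𝒯.map_comp]; rfl
  · rw [← 𝒯.map_comp, ← 𝒯.xi_unit 𝔵]
    exact 𝒯.xi_mono _ _ hr 𝔵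

theorem tens_le_kleisli {X Y Z : Type u} (β : T Y → Z → V) (α : T X → Y → V)
    (𝔛 : T (T X)) (𝔶 : T Y) (z : Z) :
    𝒯.tens (𝒯.Txi α 𝔛 𝔶) (β 𝔶 z) ≤ 𝒯.kleisli β α (𝒯.m 𝔛) z :=
  le_iSup_of_le ⟨𝔛, rfl⟩ (le_iSup_of_le 𝔶 le_rfl)

theorem le_kleisli_of_unit_le {X Y Z : Type u} {β : T Y → Z → V} (α : T X → Y → V)
    {y : Y} {z : Z} (hβ : 𝒯.unit ≤ β (𝒯.e y) z) (𝔵 : T X) :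
    α 𝔵 y ≤ 𝒯.kleisli β α 𝔵 z :=
  calc α 𝔵 y = 𝒯.tens (α 𝔵 y) 𝒯.unit := by rw [𝒯.tens_comm, 𝒯.unit_tens]
    _ ≤ 𝒯.tens (𝒯.Txi α (𝒯.e 𝔵) (𝒯.e y)) (β (𝒯.e y) z) :=
        𝒯.tens_le_tens (𝒯.le_txi_e α 𝔵 y) hβ
    _ ≤ 𝒯.kleisli β α 𝔵 z := by
        simpa only [𝒯.m_e] using 𝒯.tens_le_kleisli β α (𝒯.e 𝔵) (𝒯.e y) z

theorem le_kleisli_map {X Y W Z : Type u} (α : T Y → W → V) (β : T W → Z → V)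
    (g₁ : X → Y) (g₂ : X → W) (hα : ∀ x, 𝒯.unit ≤ α (𝒯.e (g₁ x)) (g₂ x))
    (𝔵 : T X) (z : Z) :
    β (𝒯.map g₂ 𝔵) z ≤ 𝒯.kleisli β α (𝒯.map g₁ 𝔵) z := by
  have hm : 𝒯.m (𝒯.map (𝒯.e ∘ g₁) 𝔵) = 𝒯.map g₁ 𝔵 := by rw [𝒯.map_comp, 𝒯.m_map_e]
  calc β (𝒯.map g₂ 𝔵) z = 𝒯.tens 𝒯.unit (β (𝒯.map g₂ 𝔵) z) := (𝒯.unit_tens _).symm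
    _ ≤ 𝒯.tens (𝒯.Txi α (𝒯.map (𝒯.e ∘ g₁) 𝔵) (𝒯.map g₂ 𝔵)) (β (𝒯.map g₂ 𝔵) z) :=
        𝒯.tens_le_tens (𝒯.unit_le_txi_map _ g₂ hα 𝔵) le_rfl
    _ ≤ 𝒯.kleisli β α (𝒯.map g₁ 𝔵) z := hm ▸ 𝒯.tens_le_kleisli β α _ _ z

theorem kleisli_le_rel_map {X Y W Z : Type u} (b : 𝒯.TCatStr Y) {α : T X → W → V}
    {β : T W → Z → V} (g : X → Y) (h : W → Y) {z : Z} {y : Y}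
    (hα : ∀ 𝔵 w, α 𝔵 w ≤ b.rel (𝒯.map g 𝔵) (h w))
    (hβ : ∀ 𝔴, β 𝔴 z ≤ b.rel (𝒯.map h 𝔴) y) (𝔵 : T X) :
    𝒯.kleisli β α 𝔵 z ≤ b.rel (𝒯.map g 𝔵) y := by
  refine iSup_le fun ⟨𝔛, h𝔛⟩ => iSup_le fun 𝔴 => ?_
  have hm : 𝒯.m (𝒯.map (𝒯.map g) 𝔛) = 𝒯.map g 𝔵 := by rw [← 𝒯.m_nat, h𝔛]
  calc 𝒯.tens (𝒯.Txi α 𝔛 𝔴) (β 𝔴 z)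
      ≤ 𝒯.tens (𝒯.Txi b.rel (𝒯.map (𝒯.map g) 𝔛) (𝒯.map h 𝔴)) (b.rel (𝒯.map h 𝔴) y) :=
        𝒯.tens_le_tens (𝒯.txi_le_txi_map _ h hα 𝔛 𝔴) (hβ 𝔴)
    _ ≤ 𝒯.kleisli b.rel b.rel (𝒯.map g 𝔵) y := hm ▸ 𝒯.tens_le_kleisli _ _ _ _ y
    _ ≤ b.rel (𝒯.map g 𝔵) y := b.comp _ y

section Modules

variable {X Y : Type u} {a : 𝒯.TCatStr X} {b : 𝒯.TCatStr Y} {f : X → Y}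

theorem kleisli_rel_modStar_le (𝔵 : T X) (y : Y) :
    𝒯.kleisli b.rel (modStar b f) 𝔵 y ≤ modStar b f 𝔵 y :=
  𝒯.kleisli_le_rel_map b f id (fun _ _ => le_rfl) (fun 𝔴 => by rw [map_id_apply]) 𝔵

theorem kleisli_modCostar_rel_le (𝔶 : T Y) (x : X) :
    𝒯.kleisli (modCostar b f) b.rel 𝔶 x ≤ modCostar b f 𝔶 x :=
  b.comp 𝔶 (f x)

theorem kleisli_modCostar_modStar (𝔵 : T X) (x : X) :
    𝒯.kleisli (modCostar b f) (modStar b f) 𝔵 x = b.rel (𝒯.map f 𝔵) (f x) := by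
  refine le_antisymm (kleisli_rel_modStar_le 𝔵 (f x)) ?_
  have hle := 𝒯.le_kleisli_map (modStar b f) (modCostar b f) id f
    (fun x' => by rw [modStar, 𝒯.e_nat]; exact b.le_refl (f x')) 𝔵 x
  rwa [map_id_apply] at hle

theorem IsTFunctor.isTModRel_modStar (hf : IsTFunctor a b f) :
    𝒯.IsTModRel a.rel b.rel (modStar b f) :=
  ⟨fun 𝔵 _ => 𝒯.kleisli_le_rel_map b f f hf (fun _ => le_rfl) 𝔵, kleisli_rel_modStar_le⟩

theorem IsTFunctor.isTModRel_modCostar (hf : IsTFunctor a b f) :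
    𝒯.IsTModRel b.rel a.rel (modCostar b f) := by
  refine ⟨kleisli_modCostar_rel_le, fun 𝔶 x => ?_⟩
  have hle := 𝒯.kleisli_le_rel_map b (β := a.rel) id f (fun _ _ => by rw [map_id_apply])
    (fun 𝔴 => hf 𝔴 x) 𝔶
  rwa [map_id_apply] at hle

theorem isTFunctor_of_kleisli_modStar_rel_le
    (h : ∀ 𝔵 y, 𝒯.kleisli (modStar b f) a.rel 𝔵 y ≤ modStar b f 𝔵 y) :
    IsTFunctor a b f := fun 𝔵 x =>
  (𝒯.le_kleisli_of_unit_le a.rel (by simpa only [modStar, 𝒯.e_nat] using b.le_refl (f x))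
    𝔵).trans (h 𝔵 (f x))

theorem isTFunctor_of_kleisli_rel_modCostar_le
    (h : ∀ 𝔶 x, 𝒯.kleisli a.rel (modCostar b f) 𝔶 x ≤ modCostar b f 𝔶 x) :
    IsTFunctor a b f := fun 𝔵 x => by
  have hle := 𝒯.le_kleisli_map (modCostar b f) a.rel f id
    (fun x' => b.le_refl (f x')) 𝔵 x
  rw [map_id_apply] at hle
  exact hle.trans (h (𝒯.map f 𝔵) x)

end Modules

/-- Lemma 1.2. For `𝒯`-categories `(X,a)`, `(Y,b)` and a function
`f : X → Y`, the following are equivalent: (i) `f` is a `𝒯`-functor;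
(ii) `f_* = b·Tf` is a `𝒯`-module `(X,a) ⇸∘ (Y,b)`; (iii) `f^* = f°·b` is a
`𝒯`-module `(Y,b) ⇸∘ (X,a)`; (iv) `a ≤ f^* ∘ f_*`. -/
theorem statement10 (𝒯 : TopTheory V T) {X Y : Type u}
    (a : 𝒯.TCatStr X) (b : 𝒯.TCatStr Y) (f : X → Y) :
    (IsTFunctor a b f ↔ 𝒯.IsTModRel a.rel b.rel (modStar b f)) ∧
    (IsTFunctor a b f ↔ 𝒯.IsTModRel b.rel a.rel (modCostar b f)) ∧
    (IsTFunctor a b f ↔ ∀ (𝔵 : T X) (x : X),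
      a.rel 𝔵 x ≤ 𝒯.kleisli (modCostar b f) (modStar b f) 𝔵 x) := by
  refine ⟨⟨IsTFunctor.isTModRel_modStar, fun h => isTFunctor_of_kleisli_modStar_rel_le h.1⟩,
    ⟨IsTFunctor.isTModRel_modCostar, fun h => isTFunctor_of_kleisli_rel_modCostar_le h.2⟩, ?_⟩
  simp only [kleisli_modCostar_modStar]
  rfl

end TopTheory

end Paper
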